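/- arXiv:2402.02853 — 2 statements merged into one kernel-verified Lean document; each statement's English description precedes it below -/
import Mathlib

section
/- Let q ≥ 4 be a power of 2, let m ≥ 2 be an integer, n = (q^m − 1)/(q − 1), and let β be a primitive n-th root of unity in F_{q^m}. Then the minimal polynomials m_β(x) and m_{β^2}(x) over F_q both have degree m, and the cyclic code of length 2n over F_q with generator polynomial (x−1)^2 m_β(x) m_{β^2}(x) has dimension 2n − 2m − 2 and minimum distance exactly 4. -/
open Polynomial IntermediateField

/-- The cyclic code of length `N` over the field `F` generated by the polynomial `g`.
Codewords are identified with the representatives of degree `< N` of the elements of the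
ideal generated by `g` in `F[x]/(x^N - 1)`; equivalently, a polynomial `c` of degree `< N`
is a codeword iff `c ∈ (g, x^N - 1)` as an ideal of `F[x]`. -/
noncomputable def cyclicCode (F : Type*) [Field F] (N : ℕ) (g : Polynomial F) :
    Submodule F (Polynomial F) :=
  Polynomial.degreeLT F N ⊓
    Submodule.restrictScalars F (Ideal.span ({g, Polynomial.X ^ N - 1} : Set (Polynomial F)))

/-- The minimum distance (equivalently, the minimum Hamming weight of a nonzero codeword,
a codeword being identified with its coefficient vector) of a linear code of polynomials. -/
noncomputable def minDist {F : Type*} [Field F] (C : Submodule F (Polynomial F)) : ℕ :=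
  sInf {w | ∃ c ∈ C, c ≠ 0 ∧ c.support.card = w}

theorem mem_cyclicCode {F : Type*} [Field F] {N : ℕ} {g : Polynomial F}
    (hdvd : g ∣ X ^ N - 1) (c : Polynomial F) :
    c ∈ cyclicCode F N g ↔ c.degree < N ∧ g ∣ c := by
  have hspan : Ideal.span ({g, X ^ N - 1} : Set (Polynomial F)) = Ideal.span {g} := by
    rw [show ({g, X ^ N - 1} : Set (Polynomial F)) = insert g {X ^ N - 1} from rfl,
      Ideal.span_insert, sup_eq_left, Ideal.span_le]
    intro x hx
    simp only [Set.mem_singleton_iff] at hx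
    subst hx
    exact Ideal.mem_span_singleton.2 hdvd
  simp [cyclicCode, Submodule.mem_inf, Polynomial.mem_degreeLT, hspan,
    Ideal.mem_span_singleton]

theorem cyclicCode_eq_map {F : Type*} [Field F] {N k : ℕ} {g : Polynomial F}
    (hg : g ≠ 0) (hk : g.natDegree = k) (hkN : k ≤ N) (hdvd : g ∣ X ^ N - 1) :
    cyclicCode F N g =
      Submodule.map (LinearMap.mulLeft F g) (Polynomial.degreeLT F (N - k)) := by
  ext c
  rw [mem_cyclicCode hdvd c]
  simp only [Submodule.mem_map, LinearMap.mulLeft_apply, Polynomial.mem_degreeLT]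
  constructor
  · rintro ⟨hdeg, p, rfl⟩
    refine ⟨p, ?_, rfl⟩
    rcases eq_or_ne p 0 with rfl | hp
    · rw [degree_zero]
      exact lt_of_lt_of_le (WithBot.bot_lt_coe 0) (by exact_mod_cast Nat.zero_le _)
    · rw [← natDegree_lt_iff_degree_lt hp]
      have hgp : g * p ≠ 0 := mul_ne_zero hg hp
      rw [← natDegree_lt_iff_degree_lt hgp, natDegree_mul hg hp, hk] at hdeg
      omega
  · rintro ⟨p, hp, rfl⟩
    refine ⟨?_, Dvd.intro p rfl⟩
    rcases eq_or_ne p 0 with rfl | hp0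
    · rw [mul_zero, degree_zero]
      exact lt_of_lt_of_le (WithBot.bot_lt_coe 0) (by exact_mod_cast Nat.zero_le _)
    · rw [← natDegree_lt_iff_degree_lt hp0] at hp
      rw [← natDegree_lt_iff_degree_lt (mul_ne_zero hg hp0), natDegree_mul hg hp0, hk]
      omega

theorem finrank_cyclicCode {F : Type*} [Field F] {N k : ℕ} {g : Polynomial F}
    (hg : g ≠ 0) (hk : g.natDegree = k) (hkN : k ≤ N) (hdvd : g ∣ X ^ N - 1) :
    Module.finrank F (cyclicCode F N g) = N - k := by
  rw [cyclicCode_eq_map hg hk hkN hdvd]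
  have hinj : Function.Injective (LinearMap.mulLeft F g) := fun a b h => by
    simpa using mul_left_cancel₀ hg (h : g * a = g * b)
  rw [← LinearEquiv.finrank_eq
    (Submodule.equivMapOfInjective (LinearMap.mulLeft F g) hinj (Polynomial.degreeLT F (N-k)))]
  rw [LinearEquiv.finrank_eq (Polynomial.degreeLTEquiv F (N-k)), Module.finrank_fin_fun]

theorem minpoly_deg {F K : Type*} [Field F] [Fintype F] [Field K] [Fintype K] [Algebra F K]
    (q m n : ℕ) (hq : Fintype.card F = q) (hq1 : 2 ≤ q) (hm : 1 ≤ m)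
    (hK : Fintype.card K = q ^ m) (hnq : q ^ (m-1) ≤ n) (hn0 : 0 < n)
    (γ : K) (hγ : IsPrimitiveRoot γ n) : (minpoly F γ).natDegree = m := by
  have hrank : Module.finrank F K = m := by
    have h := Module.card_eq_pow_finrank (K := F) (V := K)
    rw [hq, hK] at h
    exact (Nat.pow_right_injective hq1 h.symm)
  have hint : IsIntegral F γ := IsIntegral.of_finite F γ
  rw [← IntermediateField.adjoin.finrank hint]
  set E := F⟮γ⟯ with hE
  haveI : Fintype E := Fintype.ofFinite E
  set d := Module.finrank F E with hd
  have hdm : d ≤ m := hrank ▸ Submodule.finrank_le (Submodule.restrictScalars F E.toSubmodule)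
  have hcardE : Fintype.card E = q ^ d := by
    rw [← hq]; exact Module.card_eq_pow_finrank
  have hγE : γ ∈ E := IntermediateField.mem_adjoin_simple_self F γ
  have hγne : γ ≠ 0 := hγ.ne_zero hn0.ne'
  have hpow : γ ^ (q ^ d - 1) = 1 := by
    have h1 : (⟨γ, hγE⟩ : E) ^ (Fintype.card E - 1) = 1 :=
      FiniteField.pow_card_sub_one_eq_one _ (by
        simp only [ne_eq, Subtype.ext_iff, ZeroMemClass.coe_zero]
        exact hγne)
    have h2 : γ ^ (Fintype.card E - 1) = 1 := by
      have h3 := congrArg (Subtype.val) h1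
      push_cast at h3
      exact_mod_cast h3
    rwa [hcardE] at h2
  have hdvd : n ∣ q ^ d - 1 := hγ.dvd_of_pow_eq_one _ hpow
  have hd1 : 1 ≤ d := Module.finrank_pos
  have hq0 : 0 < q := by omega
  have hlt : q ^ (m - 1) < q ^ d := by
    calc q ^ (m-1) ≤ n := hnq
    _ ≤ q ^ d - 1 := Nat.le_of_dvd (by
        have := Nat.one_lt_pow (by omega : d ≠ 0) hq1
        omega) hdvd
    _ < q ^ d := by have h4 : 0 < q ^ d := pow_pos (by omega) d; omega
  have : m - 1 < d := (Nat.pow_lt_pow_iff_right hq1).1 hlt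
  omega

theorem minpoly_ne {F K : Type*} [Field F] [Fintype F] [Field K] [Fintype K] [Algebra F K]
    (m n : ℕ) (hrank : Module.finrank F K = m) (hn2 : 2 ^ m ≤ n) (hn0 : 0 < n)
    (β : K) (hβ : IsPrimitiveRoot β n) : minpoly F β ≠ minpoly F (β ^ 2) := by
  intro heq
  have horbit := (Normal.minpoly_eq_iff_mem_orbit (F := F) (E := K)).1 heq
  obtain ⟨σ, hσ⟩ := horbit
  have hσ' : σ (β ^ 2) = β := hσ
  set τ := σ⁻¹ with hτ
  have hτβ : τ β = β ^ 2 := by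
    apply σ.injective
    rw [hσ', hτ]
    exact σ.apply_symm_apply β
  have hiter : ∀ k : ℕ, (τ ^ k) β = β ^ 2 ^ k := by
    intro k
    induction k with
    | zero => simp
    | succ k ih =>
      rw [pow_succ', AlgEquiv.mul_apply, ih, map_pow, hτβ, ← pow_mul,
        mul_comm 2 (2^k), ← pow_succ]
  set r := orderOf τ with hr
  have hr1 : 1 ≤ r := orderOf_pos τ
  have hrm : r ≤ m := by
    have := orderOf_le_card_univ (x := τ)
    rwa [← Nat.card_eq_fintype_card, IsGalois.card_aut_eq_finrank F K, hrank] at this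
  have hβr : β ^ 2 ^ r = β := by
    rw [← hiter r, hr, pow_orderOf_eq_one, AlgEquiv.one_apply]
  have hβ1 : β ^ (2 ^ r - 1) = 1 := by
    have hβne : β ≠ 0 := hβ.ne_zero hn0.ne'
    have h2 : (0:ℕ) < 2 ^ r := pow_pos (by norm_num) r
    have : β ^ (2 ^ r - 1) * β = 1 * β := by
      rw [one_mul, ← pow_succ]
      rw [Nat.sub_add_cancel h2, hβr]
    exact mul_right_cancel₀ hβne this
  have hdvd : n ∣ 2 ^ r - 1 := hβ.dvd_of_pow_eq_one _ hβ1
  have h2r : 2 ^ r - 1 < n := by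
    have : (2:ℕ) ^ r ≤ 2 ^ m := Nat.pow_le_pow_right (by norm_num) hrm
    omega
  have : 0 < 2 ^ r - 1 := by
    have : (2:ℕ) ^ 1 ≤ 2 ^ r := Nat.pow_le_pow_right (by norm_num) hr1
    omega
  have := Nat.le_of_dvd ‹0 < 2 ^ r - 1› hdvd
  omega

theorem vdm3 {K : Type*} [Field K] (a b c u v w : K) (hb : b ≠ 0) (hc : c ≠ 0)
    (ha : a ≠ 0) (h0 : a+b+c=0) (h1 : a*u+b*v+c*w=0) (h2 : a*u^2+b*v^2+c*w^2=0) :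
    u = v ∧ v = w := by
  have e1 : a*((u-v)*(u-w)) = 0 := by linear_combination h2 - (v+w)*h1 + v*w*h0
  rcases mul_eq_zero.1 ((mul_eq_zero.1 e1).resolve_left ha) with h | h
  · have huv : u = v := sub_eq_zero.1 h
    have e2 : c*(w-u) = 0 := by linear_combination h1 - u*h0 + b*huv
    have hwu : w = u := sub_eq_zero.1 ((mul_eq_zero.1 e2).resolve_left hc)
    exact ⟨huv, huv ▸ hwu.symm ▸ rfl⟩
  · have huw : u = w := sub_eq_zero.1 h
    have e2 : b*(v-u) = 0 := by linear_combination h1 - u*h0 + c*huw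
    have hvu : v = u := sub_eq_zero.1 ((mul_eq_zero.1 e2).resolve_left hb)
    exact ⟨hvu.symm, hvu.trans huw⟩

theorem eval_one_eq_sum {F : Type*} [Field F] (c : F[X]) :
    c.eval 1 = ∑ i ∈ c.support, c.coeff i := by
  rw [eval_eq_sum, Polynomial.sum]; simp

theorem aeval_eq_sum' {F K : Type*} [Field F] [Field K] [Algebra F K] (β : K) (c : F[X]) :
    aeval β c = ∑ i ∈ c.support, algebraMap F K (c.coeff i) * β ^ i := by
  rw [aeval_def, eval₂_eq_sum, Polynomial.sum]

theorem deriv_eval_one_eq_sum {F : Type*} [Field F] (c : F[X]) :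
    (derivative c).eval 1 = ∑ i ∈ c.support, c.coeff i * (i : F) := by
  rw [derivative_apply, Polynomial.sum, eval_finset_sum]
  simp

theorem weight_lb {F K : Type*} [Field F] [Field K] [Algebra F K]
    (n : ℕ) (hn0 : 0 < n) (hnF : (n : F) = 1)
    (β : K) (hβ : IsPrimitiveRoot β n)
    (c : Polynomial F) (hc0 : c ≠ 0) (hdeg : ∀ i ∈ c.support, i < 2*n)
    (hA : aeval β c = 0) (hB : aeval (β^2) c = 0) (hC : c.eval 1 = 0)
    (hD : (derivative c).eval 1 = 0) : 4 ≤ c.support.card := by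
  have hβ0 : β ≠ 0 := hβ.ne_zero hn0.ne'
  have pairdiff : ∀ i j : ℕ, i < j → j < 2*n → β^i = β^j → j = i + n := by
    intro i j hij hj2 he
    have h1 : β ^ i * β ^ (j - i) = β ^ i * 1 := by
      rw [mul_one, ← pow_add, Nat.add_sub_cancel' hij.le, he]
    have h2 : β ^ (j - i) = 1 := mul_left_cancel₀ (pow_ne_zero i hβ0) h1
    obtain ⟨k, hk⟩ := hβ.dvd_of_pow_eq_one _ h2
    have hk2 : k < 2 := by
      by_contra hk2
      push_neg at hk2
      have : n * 2 ≤ n * k := Nat.mul_le_mul_left n hk2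
      omega
    interval_cases k <;> omega
  have hpair : ∀ i j : ℕ, i ≠ j → i < 2*n → j < 2*n → β^i = β^j →
      i = j + n ∨ j = i + n := by
    intro i j hij hi2 hj2 he
    rcases lt_or_gt_of_ne hij with h | h
    · exact Or.inr (pairdiff i j h hj2 he)
    · exact Or.inl (pairdiff j i h hi2 he.symm)
  by_contra hlt
  push_neg at hlt
  interval_cases hw : c.support.card
  · exact hc0 (Polynomial.support_eq_empty.1 (Finset.card_eq_zero.1 hw))
  · obtain ⟨i, hi⟩ := Finset.card_eq_one.1 hw
    rw [eval_one_eq_sum, hi, Finset.sum_singleton] at hC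
    have : i ∈ c.support := hi ▸ Finset.mem_singleton_self i
    exact (Polynomial.mem_support_iff.1 this) hC
  · obtain ⟨i, j, hij, hs⟩ := Finset.card_eq_two.1 hw
    have hiS : i ∈ c.support := hs ▸ by simp
    have hjS : j ∈ c.support := hs ▸ by simp
    have ha : c.coeff i ≠ 0 := Polynomial.mem_support_iff.1 hiS
    have hb : c.coeff j ≠ 0 := Polynomial.mem_support_iff.1 hjS
    rw [eval_one_eq_sum, hs, Finset.sum_pair hij] at hC
    rw [aeval_eq_sum', hs, Finset.sum_pair hij] at hA
    rw [deriv_eval_one_eq_sum, hs, Finset.sum_pair hij] at hD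
    have hbv : c.coeff j = - c.coeff i := by linear_combination hC
    rw [hbv] at hA hD
    have hAA : algebraMap F K (c.coeff i) * (β ^ i - β ^ j) = 0 := by
      rw [map_neg] at hA
      linear_combination hA
    have hij' : β ^ i = β ^ j := by
      have := (mul_eq_zero.1 hAA).resolve_left
        ((map_ne_zero (algebraMap F K)).2 ha)
      exact sub_eq_zero.1 this
    have hcases := hpair i j hij (hdeg i hiS) (hdeg j hjS) hij'
    have hDD : c.coeff i * ((i:F) - (j:F)) = 0 := by linear_combination hD
    have hijF : (i:F) = (j:F) := sub_eq_zero.1 ((mul_eq_zero.1 hDD).resolve_left ha)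
    rcases hcases with h | h
    · subst h
      push_cast [hnF] at hijF
      exact one_ne_zero (by linear_combination hijF)
    · subst h
      push_cast [hnF] at hijF
      exact one_ne_zero (by linear_combination - hijF)
  · obtain ⟨i, j, k, hij, hik, hjk, hs⟩ := Finset.card_eq_three.1 hw
    have hiS : i ∈ c.support := hs ▸ by simp
    have hjS : j ∈ c.support := hs ▸ by simp
    have hkS : k ∈ c.support := hs ▸ by simp
    have ha : c.coeff i ≠ 0 := Polynomial.mem_support_iff.1 hiS
    have hb : c.coeff j ≠ 0 := Polynomial.mem_support_iff.1 hjS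
    have hc : c.coeff k ≠ 0 := Polynomial.mem_support_iff.1 hkS
    have hsum : ∀ f : ℕ → K, ∑ t ∈ c.support, f t = f i + f j + f k := by
      intro f
      rw [hs, show ({i,j,k} : Finset ℕ) = insert i {j,k} from rfl,
        Finset.sum_insert (by simp [hij, hik]), Finset.sum_pair hjk, add_assoc]
    have φinj : ∀ x : F, x ≠ 0 → algebraMap F K x ≠ 0 :=
      fun x hx => (map_ne_zero (algebraMap F K)).2 hx
    rw [eval_one_eq_sum, hs, show ({i,j,k} : Finset ℕ) = insert i {j,k} from rfl,
      Finset.sum_insert (by simp [hij, hik]), Finset.sum_pair hjk] at hC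
    rw [aeval_eq_sum', hsum] at hA
    rw [aeval_eq_sum', hsum] at hB
    have h0K : algebraMap F K (c.coeff i) + algebraMap F K (c.coeff j)
        + algebraMap F K (c.coeff k) = 0 := by
      rw [← map_add, ← map_add]
      rw [show c.coeff i + c.coeff j + c.coeff k = 0 by linear_combination hC]
      exact map_zero _
    have epow : ∀ t : ℕ, (β^2)^t = (β^t)^2 := fun t => by
      rw [← pow_mul, ← pow_mul, mul_comm]
    simp only [epow] at hB
    have hveq := vdm3 _ _ _ (β^i) (β^j) (β^k) (φinj _ hb) (φinj _ hc) (φinj _ ha)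
      h0K (by linear_combination hA) (by linear_combination hB)
    have h1 := hpair i j hij (hdeg i hiS) (hdeg j hjS) hveq.1
    have h2 := hpair j k hjk (hdeg j hjS) (hdeg k hkS) hveq.2
    have di := hdeg i hiS
    have dj := hdeg j hjS
    have dk := hdeg k hkS
    omega

set_option maxHeartbeats 1000000 in
theorem statement8 {F K : Type*} [Field F] [Fintype F] [Field K] [Fintype K] [Algebra F K]
    (q : ℕ) (hq : Fintype.card F = q) (hq2 : ∃ e : ℕ, q = 2 ^ e) (hq4 : 4 ≤ q)
    (m : ℕ) (hm : 2 ≤ m) (hK : Fintype.card K = q ^ m)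
    (n : ℕ) (hn : n = (q ^ m - 1) / (q - 1))
    (β : K) (hβ : IsPrimitiveRoot β n) :
    (minpoly F β).natDegree = m ∧
    (minpoly F (β ^ 2)).natDegree = m ∧
    Module.finrank F
        (cyclicCode F (2 * n) ((X - 1) ^ 2 * minpoly F β * minpoly F (β ^ 2))) =
      2 * n - 2 * m - 2 ∧
    minDist (cyclicCode F (2 * n) ((X - 1) ^ 2 * minpoly F β * minpoly F (β ^ 2))) = 4 := by
  obtain ⟨e, he⟩ := hq2
  have he2 : 2 ≤ e := by
    by_contra h
    push_neg at h
    interval_cases e <;> omega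
  have hq0 : 0 < q := by omega
  -- characteristic 2
  haveI hF2 : CharP F 2 := by
    have hcast : (Fintype.card F : F) = 0 := FiniteField.cast_card_eq_zero F
    rw [hq, he] at hcast
    push_cast at hcast
    have h20 : (2 : F) = 0 := (pow_eq_zero_iff (by omega : e ≠ 0)).1 hcast
    have hdvd : ringChar F ∣ 2 := ringChar.dvd (by exact_mod_cast h20)
    have hprime := CharP.char_is_prime F (ringChar F)
    have hr2 : ringChar F = 2 := (Nat.prime_dvd_prime_iff_eq hprime Nat.prime_two).1 hdvd
    exact hr2 ▸ ringChar.charP F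
  have h2F : (2 : F) = 0 := by exact_mod_cast CharP.cast_eq_zero F 2
  -- arithmetic facts about n
  have hnsum : n = ∑ i ∈ Finset.range m, q ^ i := by
    have hZ : (∑ i ∈ Finset.range m, (q:ℤ) ^ i) * ((q:ℤ) - 1) = (q:ℤ)^m - 1 :=
      geom_sum_mul (q:ℤ) m
    have h1 : 1 ≤ q ^ m := Nat.one_le_pow _ _ hq0
    have hN : (q - 1) * ∑ i ∈ Finset.range m, q ^ i = q ^ m - 1 := by
      zify [h1, (by omega : 1 ≤ q)]
      push_cast at hZ ⊢
      linarith [hZ]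
    rw [hn, ← hN, Nat.mul_div_cancel_left _ (by omega : 0 < q - 1)]
  have hnge : q ^ (m-1) ≤ n := by
    rw [hnsum]
    exact Finset.single_le_sum (f := fun i => q ^ i) (fun i _ => Nat.zero_le _)
      (Finset.mem_range.2 (by omega))
  have hn0 : 0 < n := lt_of_lt_of_le (pow_pos hq0 (m-1)) hnge
  have h2m_le : 2 ^ m ≤ n := by
    have h1 : 2 * (m-1) ≤ e * (m-1) := Nat.mul_le_mul_right (m-1) he2
    calc (2:ℕ) ^ m ≤ 2 ^ (e * (m - 1)) := Nat.pow_le_pow_right (by omega) (by omega)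
    _ = q ^ (m-1) := by rw [he, ← pow_mul]
    _ ≤ n := hnge
  have hN' : (q - 1) * n = q ^ m - 1 := by
    rw [hnsum]
    have hZ : (∑ i ∈ Finset.range m, (q:ℤ) ^ i) * ((q:ℤ) - 1) = (q:ℤ)^m - 1 :=
      geom_sum_mul (q:ℤ) m
    have h1 : 1 ≤ q ^ m := Nat.one_le_pow _ _ hq0
    zify [h1, (by omega : 1 ≤ q)]
    push_cast at hZ ⊢
    linarith [hZ]
  have hnodd : ¬ 2 ∣ n := by
    intro ⟨t, ht⟩
    have hqm : q ^ m = 2 * 2 ^ (e*m - 1) := by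
      have hem : 1 ≤ e * m := Nat.one_le_iff_ne_zero.2 (by positivity)
      rw [he, ← pow_mul]
      conv_lhs => rw [show e*m = 1 + (e*m - 1) by omega]
      rw [pow_add, pow_one]
    have h2t : 2 * ((q-1)*t) = q ^ m - 1 := by rw [← hN', ht]; ring
    have hpos : 0 < 2 ^ (e*m-1) := pow_pos (by norm_num) _
    omega
  have hnF : (n : F) = 1 := by
    obtain ⟨t, ht⟩ : ∃ t, n = 2*t + 1 := by
      rcases Nat.even_or_odd n with hev | hod
      · exact absurd (hev.two_dvd) hnodd
      · obtain ⟨t, ht⟩ := hod; exact ⟨t, ht⟩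
    rw [ht]
    push_cast
    rw [h2F]
    ring
  have hβ2 : IsPrimitiveRoot (β^2) n :=
    hβ.pow_of_coprime 2 ((Nat.prime_two.coprime_iff_not_dvd).2 hnodd)
  -- minpoly degrees
  have hdegβ : (minpoly F β).natDegree = m :=
    minpoly_deg q m n hq (by omega) (by omega) hK hnge hn0 β hβ
  have hdegβ2 : (minpoly F (β^2)).natDegree = m :=
    minpoly_deg q m n hq (by omega) (by omega) hK hnge hn0 (β^2) hβ2
  have hrank : Module.finrank F K = m := by
    have h := Module.card_eq_pow_finrank (K := F) (V := K)
    rw [hq, hK] at h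
    exact (Nat.pow_right_injective (by omega) h.symm)
  have hne : minpoly F β ≠ minpoly F (β^2) := minpoly_ne m n hrank h2m_le hn0 β hβ
  -- generator polynomial facts
  set p1 := minpoly F β with hp1def
  set p2 := minpoly F (β^2) with hp2def
  have hint1 : IsIntegral F β := IsIntegral.of_finite F β
  have hint2 : IsIntegral F (β^2) := IsIntegral.of_finite F (β^2)
  have hirr1 : Irreducible p1 := minpoly.irreducible hint1
  have hirr2 : Irreducible p2 := minpoly.irreducible hint2
  have hmon1 : p1.Monic := minpoly.monic hint1
  have hmon2 : p2.Monic := minpoly.monic hint2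
  have hmonX : (X - (1:F[X])).Monic := by
    rw [← C_1]; exact monic_X_sub_C 1
  have hirrX : Irreducible (X - (1:F[X])) := by
    rw [← C_1]; exact irreducible_X_sub_C 1
  have hdegX : (X - (1:F[X])).natDegree = 1 := by
    rw [← C_1]; exact natDegree_X_sub_C 1
  have hdvdX : (X - (1:F[X])) ∣ X^n - 1 := by
    rw [← C_1, dvd_iff_isRoot]
    simp [IsRoot]
  have hdvd1 : p1 ∣ X^n - 1 := minpoly.dvd F β (by
    simp [hβ.pow_eq_one])
  have hdvd2 : p2 ∣ X^n - 1 := minpoly.dvd F (β^2) (by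
    simp [hβ2.pow_eq_one])
  have cop12 : IsCoprime p1 p2 := by
    rw [hirr1.coprime_iff_not_dvd]
    intro hdvd
    exact hne (eq_of_monic_of_associated hmon1 hmon2 (hirr1.associated_of_dvd hirr2 hdvd))
  have copX1 : IsCoprime (X - (1:F[X])) p1 := by
    rw [hirrX.coprime_iff_not_dvd]
    intro hdvd
    have heq := eq_of_monic_of_associated hmonX hmon1 (hirrX.associated_of_dvd hirr1 hdvd)
    rw [← heq, hdegX] at hdegβ
    omega
  have copX2 : IsCoprime (X - (1:F[X])) p2 := by
    rw [hirrX.coprime_iff_not_dvd]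
    intro hdvd
    have heq := eq_of_monic_of_associated hmonX hmon2 (hirrX.associated_of_dvd hirr2 hdvd)
    rw [← heq, hdegX] at hdegβ2
    omega
  have hprod : (X - (1:F[X])) * (p1 * p2) ∣ X^n - 1 :=
    (copX1.mul_right copX2).mul_dvd hdvdX (cop12.mul_dvd hdvd1 hdvd2)
  set g := (X - (1:F[X]))^2 * p1 * p2 with hgdef
  have hg0 : g ≠ 0 := (((hmonX.pow 2).mul hmon1).mul hmon2).ne_zero
  have hp1ne : p1 ≠ 0 := hmon1.ne_zero
  have hp2ne : p2 ≠ 0 := hmon2.ne_zero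
  have hXne : (X - (1:F[X]))^2 ≠ 0 := (hmonX.pow 2).ne_zero
  have hgdeg : g.natDegree = 2*m + 2 := by
    rw [hgdef, natDegree_mul (mul_ne_zero hXne hp1ne) hp2ne,
      natDegree_mul hXne hp1ne, natDegree_pow, hdegX, hdegβ, hdegβ2]
    ring
  have hsq : (X^(2*n) - 1 : F[X]) = (X^n - 1)^2 := by
    have h2P : (2 : F[X]) = 0 := by
      exact_mod_cast CharP.cast_eq_zero F[X] 2
    have h2n : (X:F[X])^(2*n) = X^n * X^n := by rw [two_mul, pow_add]
    rw [h2n]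
    linear_combination ((X:F[X])^n - 1) * h2P
  have hgdvd : g ∣ X^(2*n) - 1 := by
    rw [hsq]
    calc g ∣ ((X - (1:F[X])) * (p1 * p2))^2 := ⟨p1*p2, by ring⟩
    _ ∣ (X^n - 1)^2 := pow_dvd_pow_of_dvd hprod 2
  have hkN : 2*m + 2 ≤ 2*n := by
    have := Nat.lt_two_pow_self (n := m)
    omega
  refine ⟨hdegβ, hdegβ2, ?_, ?_⟩
  · rw [finrank_cyclicCode hg0 hgdeg hkN hgdvd]
    omega
  · set C := cyclicCode F (2*n) g with hCdef
    set c₀ := (X - (1:F[X])) * (X^n - 1) with hc₀def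
    have hn2 : 2 ≤ n := le_trans (by simpa using Nat.pow_le_pow_right (by norm_num : 1 ≤ 2) (by omega : 1 ≤ m)) h2m_le
    have hc₀mem : c₀ ∈ C := by
      rw [hCdef, mem_cyclicCode hgdvd]
      constructor
      · have hd1 : (X - (1:F[X])).degree = 1 := by rw [← C_1]; exact degree_X_sub_C 1
        have hd2 : (X^n - (1:F[X])).degree = (n : WithBot ℕ) := by
          rw [← C_1]; exact degree_X_pow_sub_C hn0 1
        rw [hc₀def, degree_mul, hd1, hd2]
        exact_mod_cast (by omega : 1 + n < 2*n)
      · obtain ⟨t, ht⟩ := hprod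
        exact ⟨t, by rw [hc₀def, ht, hgdef]; ring⟩
    have hc₀ne : c₀ ≠ 0 := by
      apply mul_ne_zero hmonX.ne_zero
      rw [← C_1]
      exact X_pow_sub_C_ne_zero hn0 1
    have hc₀supp : c₀.support = {0, 1, n, n+1} := by
      have hcexp : c₀ = X^(n+1) - X^n - X + 1 := by rw [hc₀def]; ring
      ext a
      rw [Polynomial.mem_support_iff, hcexp]
      simp only [coeff_add, coeff_sub, coeff_X_pow, coeff_X, coeff_one,
        Finset.mem_insert, Finset.mem_singleton]
      constructor
      · intro h
        by_contra hmem
        push_neg at hmem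
        obtain ⟨h0, h1, hn', hn1⟩ := hmem
        rw [if_neg (by omega), if_neg (by omega), if_neg (by omega), if_neg (by omega)] at h
        simp at h
      · rintro (rfl | rfl | rfl | rfl)
        · rw [if_neg (by omega), if_neg (by omega), if_neg (by omega), if_pos rfl]
          simp
        · rw [if_neg (by omega), if_neg (by omega), if_pos rfl, if_neg (by omega)]
          simp
        · rw [if_neg (by omega), if_pos rfl, if_neg (by omega), if_neg (by omega)]
          simp
        · rw [if_pos rfl, if_neg (by omega), if_neg (by omega), if_neg (by omega)]
          simp
    have hc₀card : c₀.support.card = 4 := by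
      rw [hc₀supp]
      rw [Finset.card_insert_of_notMem (by
          simp only [Finset.mem_insert, Finset.mem_singleton]; omega),
        Finset.card_insert_of_notMem (by
          simp only [Finset.mem_insert, Finset.mem_singleton]; omega),
        Finset.card_insert_of_notMem (by
          simp only [Finset.mem_singleton]; omega),
        Finset.card_singleton]
    have h4S : 4 ∈ {w | ∃ c ∈ C, c ≠ 0 ∧ c.support.card = w} :=
      ⟨c₀, hc₀mem, hc₀ne, hc₀card⟩
    rw [minDist]
    refine le_antisymm (Nat.sInf_le h4S) ?_
    obtain ⟨c, hcC, hc0, hcard⟩ := Nat.sInf_mem (⟨4, h4S⟩ :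
      {w | ∃ c ∈ C, c ≠ 0 ∧ c.support.card = w}.Nonempty)
    rw [← hcard]
    obtain ⟨hdegc, hdvdc⟩ := (mem_cyclicCode hgdvd c).1 hcC
    have hsupp_lt : ∀ i ∈ c.support, i < 2*n := by
      intro i hi
      have h1 := le_natDegree_of_mem_supp i hi
      have h2 : c.natDegree < 2*n := by
        rwa [natDegree_lt_iff_degree_lt hc0]
      omega
    have hA : aeval β c = 0 := by
      obtain ⟨t, ht⟩ := dvd_trans (⟨(X - (1:F[X]))^2 * p2, by rw [hgdef]; ring⟩ : p1 ∣ g) hdvdc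
      rw [ht, map_mul, hp1def, minpoly.aeval, zero_mul]
    have hB : aeval (β^2) c = 0 := by
      obtain ⟨t, ht⟩ := dvd_trans (⟨(X - (1:F[X]))^2 * p1, by rw [hgdef]; ring⟩ : p2 ∣ g) hdvdc
      rw [ht, map_mul, hp2def, minpoly.aeval, zero_mul]
    have hX2dvd : (X - (1:F[X]))^2 ∣ c := dvd_trans ⟨p1 * p2, by rw [hgdef]; ring⟩ hdvdc
    have hC1 : c.eval 1 = 0 := by
      obtain ⟨t, ht⟩ := hX2dvd
      rw [ht]
      simp
    have hD : (derivative c).eval 1 = 0 := by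
      obtain ⟨t, ht⟩ := hX2dvd
      rw [ht, derivative_mul, derivative_pow]
      simp
    exact weight_lb n hn0 hnF β hβ c hc0 hsupp_lt hA hB hC1 hD
end

section
/- Let m ≥ 5 be an odd integer and let n = 3(2^m − 1). Then: (i) the multiplicative order of 2 modulo n is 2m; (ii) the least positive integer t with 3·2^t ≡ 3 (mod n) is m; (iii) the least positive integer t with 5·2^t ≡ 5 (mod n) is 2m; (iv) there is no integer j ≥ 0 with 2^j ≡ 5 (mod n); (v) there is no integer j ≥ 0 with 2^j ≡ n − 1 (mod n); (vi) there is no integer j ≥ 0 with 3·2^j ≡ n − 3 (mod n). -/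
/-!
Write `M = 2 ^ m - 1`, so `n = 3 M`. Modulo `M` every power of two reduces to `2 ^ (j % m)`, and
these representatives `1, 2, …, 2 ^ (m - 1)` are distinct residues below `M`. Hence `2` has order
`m` modulo `M`, and neither `5` nor `M - 1 ≡ -1` is a power of two modulo `M`, which already rules
out (iv)–(vi). Since `gcd (2 ^ a - 1, 2 ^ b - 1) = 2 ^ gcd a b - 1` and `m` is odd, `3 = 2 ^ 2 - 1`
and `15 = 2 ^ 4 - 1` are coprime to `M`: the Chinese remainder theorem combines the orders `2` and
`m` into `2 m`, and the factors `3` and `5` in (ii) and (iii) can be cancelled.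
-/

namespace Nat

theorem pow_sub_one_dvd_pow_sub_one_iff {a : ℕ} (ha : 2 ≤ a) (m t : ℕ) :
    a ^ m - 1 ∣ a ^ t - 1 ↔ m ∣ t := by
  rw [dvd_iff_mod_eq_zero, pow_sub_one_mod_pow_sub_one, Nat.sub_eq_zero_iff_le,
    dvd_iff_mod_eq_zero]
  simpa using Nat.pow_le_pow_iff_right (n := t % m) (m := 0) (by omega : 1 < a)

theorem pow_modEq_one_iff {a : ℕ} (ha : 2 ≤ a) (m t : ℕ) :
    a ^ t ≡ 1 [MOD a ^ m - 1] ↔ m ∣ t := by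
  rw [ModEq.comm, modEq_iff_dvd' (one_le_pow _ _ (by omega)),
    pow_sub_one_dvd_pow_sub_one_iff ha]

theorem pow_modEq_pow_mod {a : ℕ} (ha : 0 < a) (m j : ℕ) :
    a ^ j ≡ a ^ (j % m) [MOD a ^ m - 1] := by
  have h : a ^ j - 1 ≡ a ^ (j % m) - 1 [MOD a ^ m - 1] := by
    rw [ModEq, pow_sub_one_mod_pow_sub_one, pow_sub_one_mod_pow_sub_one, mod_mod]
  simpa only [Nat.sub_add_cancel (one_le_pow _ _ ha)] using h.add_right 1

theorem coprime_two_pow_sub_one {m k : ℕ} (h : Coprime m k) :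
    Coprime (2 ^ m - 1) (2 ^ k - 1) := by
  rw [Coprime, pow_sub_one_gcd_pow_sub_one, h, pow_one]

theorem two_pow_modEq_one_mul_iff {m k : ℕ} (h : Coprime m k) (t : ℕ) :
    2 ^ t ≡ 1 [MOD (2 ^ m - 1) * (2 ^ k - 1)] ↔ m * k ∣ t := by
  rw [← modEq_and_modEq_iff_modEq_mul (coprime_two_pow_sub_one h), pow_modEq_one_iff le_rfl,
    pow_modEq_one_iff le_rfl, ← h.lcm_eq_mul, lcm_dvd_iff]

theorem two_mul_two_pow_le_two_pow {r m : ℕ} (hr : r < m) : 2 * 2 ^ r ≤ 2 ^ m := by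
  rw [← pow_succ']
  exact Nat.pow_le_pow_right two_pos hr

theorem two_pow_modEq_iff_of_lt {m b : ℕ} (hm : 2 ≤ m) (hb : b < 2 ^ m - 1) (j : ℕ) :
    2 ^ j ≡ b [MOD 2 ^ m - 1] ↔ 2 ^ (j % m) = b := by
  have hj := pow_modEq_pow_mod two_pos m j
  have hlt : 2 ^ (j % m) < 2 ^ m - 1 := by
    have := two_mul_two_pow_le_two_pow (Nat.mod_lt j (by omega : 0 < m))
    have : 4 ≤ 2 ^ m := Nat.pow_le_pow_right two_pos hm
    omega
  exact ⟨fun h => (hj.symm.trans h).eq_of_lt_of_lt hlt hb, fun h => h ▸ hj⟩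

theorem two_pow_ne_five (k : ℕ) : 2 ^ k ≠ 5 := by
  intro h
  rcases k with _ | k
  · simp at h
  · have : Even (2 ^ (k + 1)) := Nat.even_pow.mpr ⟨even_two, k.succ_ne_zero⟩
    exact absurd (h ▸ this) (by decide)

theorem not_two_pow_modEq_five {m : ℕ} (hm : 3 ≤ m) (j : ℕ) : ¬ 2 ^ j ≡ 5 [MOD 2 ^ m - 1] := by
  have : 8 ≤ 2 ^ m := Nat.pow_le_pow_right two_pos hm
  rw [two_pow_modEq_iff_of_lt (by omega) (by omega)]
  exact two_pow_ne_five _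

theorem not_two_pow_modEq_two_pow_sub_two {m : ℕ} (hm : 3 ≤ m) (j : ℕ) :
    ¬ 2 ^ j ≡ 2 ^ m - 2 [MOD 2 ^ m - 1] := by
  have : 8 ≤ 2 ^ m := Nat.pow_le_pow_right two_pos hm
  rw [two_pow_modEq_iff_of_lt (by omega) (by omega)]
  have := two_mul_two_pow_le_two_pow (Nat.mod_lt j (by omega : 0 < m))
  omega

theorem coprime_five_three_mul_two_pow_sub_one {m : ℕ} (hm : Odd m) :
    Coprime 5 (3 * (2 ^ m - 1)) := by
  have h15 : Coprime (2 ^ 4 - 1) (2 ^ m - 1) :=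
    coprime_two_pow_sub_one (Coprime.pow_left 2 (coprime_two_left.mpr hm))
  exact Coprime.mul_right (by norm_num) (h15.coprime_dvd_left (by norm_num))

end Nat

theorem isLeast_pos_of_forall_iff_dvd {P : ℕ → Prop} {k : ℕ} (hk : 0 < k)
    (hP : ∀ t, P t ↔ k ∣ t) : IsLeast {t | 0 < t ∧ P t} k :=
  ⟨⟨hk, (hP k).mpr dvd_rfl⟩, fun t ht => Nat.le_of_dvd ht.1 ((hP t).mp ht.2)⟩

/-- number-theoretic facts about `n = 3(2^m - 1)` for odd `m ≥ 5`:
(i) the multiplicative order of `2` modulo `n` is `2m`;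
(ii) the least positive `t` with `3·2^t ≡ 3 (mod n)` is `m`;
(iii) the least positive `t` with `5·2^t ≡ 5 (mod n)` is `2m`;
(iv) no `j ≥ 0` has `2^j ≡ 5 (mod n)`;
(v) no `j ≥ 0` has `2^j ≡ n - 1 (mod n)`;
(vi) no `j ≥ 0` has `3·2^j ≡ n - 3 (mod n)`. -/
theorem statement14 (m : ℕ) (hm : 5 ≤ m) (hmo : Odd m)
    (n : ℕ) (hn : n = 3 * (2 ^ m - 1)) :
    IsLeast {t : ℕ | 0 < t ∧ 2 ^ t ≡ 1 [MOD n]} (2 * m) ∧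
    IsLeast {t : ℕ | 0 < t ∧ 3 * 2 ^ t ≡ 3 [MOD n]} m ∧
    IsLeast {t : ℕ | 0 < t ∧ 5 * 2 ^ t ≡ 5 [MOD n]} (2 * m) ∧
    (¬ ∃ j : ℕ, 2 ^ j ≡ 5 [MOD n]) ∧
    (¬ ∃ j : ℕ, 2 ^ j ≡ n - 1 [MOD n]) ∧
    (¬ ∃ j : ℕ, 3 * 2 ^ j ≡ n - 3 [MOD n]) := by
  subst hn
  have hpow : 1 ≤ 2 ^ m := Nat.one_le_two_pow
  have hord : ∀ t, 2 ^ t ≡ 1 [MOD 3 * (2 ^ m - 1)] ↔ 2 * m ∣ t :=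
    Nat.two_pow_modEq_one_mul_iff (m := 2) (Nat.coprime_two_left.mpr hmo)
  have hord3 (t : ℕ) : 3 * 2 ^ t ≡ 3 * 1 [MOD 3 * (2 ^ m - 1)] ↔ m ∣ t :=
    (Nat.ModEq.mul_left_cancel_iff' three_ne_zero).trans (Nat.pow_modEq_one_iff le_rfl m t)
  have hord5 (t : ℕ) : 5 * 2 ^ t ≡ 5 * 1 [MOD 3 * (2 ^ m - 1)] ↔ 2 * m ∣ t :=
    ⟨fun h => (hord t).mp (h.cancel_left_of_coprime
      (Nat.coprime_five_three_mul_two_pow_sub_one hmo).symm), fun h => ((hord t).mpr h).mul_left 5⟩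
  have hn_sub_one : 3 * (2 ^ m - 1) - 1 ≡ 2 ^ m - 2 [MOD 2 ^ m - 1] :=
    ((Nat.modEq_iff_dvd' (by omega)).mpr ⟨2, by omega⟩).symm
  have hn_sub_three : 3 * (2 ^ m - 1) - 3 = 3 * (2 ^ m - 2) := by omega
  refine ⟨isLeast_pos_of_forall_iff_dvd (by omega) hord,
    isLeast_pos_of_forall_iff_dvd (by omega) hord3,
    isLeast_pos_of_forall_iff_dvd (by omega) hord5, ?_, ?_, ?_⟩
  · exact fun ⟨j, hj⟩ => Nat.not_two_pow_modEq_five (by omega) j (hj.of_mul_left 3)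
  · exact fun ⟨j, hj⟩ => Nat.not_two_pow_modEq_two_pow_sub_two (by omega) j
      ((hj.of_mul_left 3).trans hn_sub_one)
  · rw [hn_sub_three]
    exact fun ⟨j, hj⟩ => Nat.not_two_pow_modEq_two_pow_sub_two (by omega) j
      ((Nat.ModEq.mul_left_cancel_iff' three_ne_zero).mp hj)
end
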